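/- Let $1 \le r < s$ be integers and let $\mu_1, \dots, \mu_s$ be positive integers. Then $\sum_{i=s-r}^{s} (-1)^i \binom{i}{s-r} \sum_{1 \le j_1 < \cdots < j_i \le s} \binom{\sum_{e=1}^{i} \mu_{j_e} - 1}{r} = (-1)^s \, e_r(\mu_1, \dots, \mu_s)$. -/

import Mathlib

/-!
Writing `(i choose (s - r))` as the number of `(s - r)`-subsets `K` of an `i`-subset `J` and
exchanging the sums, the left side becomes a sum over `K` of the alternating sums
`∑_{L ⊆ Kᶜ} (-1)^|K ∪ L| ((μ_K - 1 + μ_L) choose r)`. As a function of `x`, `r! * (x + c choose r)`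
is a monic polynomial of degree `r = |Kᶜ|`, and such an alternating sum is its mixed finite
difference with steps `μ_t` (`t ∉ K`): each step lowers the degree by one and multiplies the top
coefficient by the degree times the step. Hence it equals `(-1)^s ∏_{t ∉ K} μ_t`, and summing over
`K`, i.e. over the `r`-subsets `Kᶜ`, gives `(-1)^s e_r(μ)`.
-/

open Polynomial Finset

section Taylor

variable {R : Type*} [CommRing R] {P : R[X]} {n : ℕ}

theorem coeff_taylor_of_natDegree_le (c : R) (h : P.natDegree ≤ n) :
    (taylor c P).coeff n = P.coeff n := by
  have : (hasseDeriv n P).natDegree ≤ 0 := (natDegree_hasseDeriv_le P n).trans (by omega)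
  rw [taylor_coeff, eq_C_of_natDegree_le_zero this, eval_C, hasseDeriv_coeff]
  simp

theorem coeff_taylor_of_natDegree_le_succ (c : R) (h : P.natDegree ≤ n + 1) :
    (taylor c P).coeff n = P.coeff n + (n + 1) * c * P.coeff (n + 1) := by
  have : (hasseDeriv n P).natDegree < 2 := (natDegree_hasseDeriv_le P n).trans_lt (by omega)
  rw [taylor_coeff, eval_eq_sum_range' this]
  simp only [hasseDeriv_coeff, sum_range_succ, range_one, sum_singleton, zero_add,
    Nat.choose_self, Nat.cast_one, one_mul, pow_zero, mul_one, add_comm 1 n,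
    Nat.choose_succ_self_right, Nat.cast_add, pow_one]
  ring

theorem natDegree_taylor_sub_le (c : R) (h : P.natDegree ≤ n + 1) :
    (taylor c P - P).natDegree ≤ n :=
  natDegree_le_iff_coeff_eq_zero.mpr fun _ hm ↦ by
    rw [coeff_sub, coeff_taylor_of_natDegree_le c (h.trans hm), sub_self]

theorem coeff_taylor_sub (c : R) (h : P.natDegree ≤ n + 1) :
    (taylor c P - P).coeff n = (n + 1) * c * P.coeff (n + 1) := by
  rw [coeff_sub, coeff_taylor_of_natDegree_le_succ c h, add_sub_cancel_left]

end Taylor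

section Finsets

variable {α : Type*}

theorem sum_powerset_eq_sum_Icc_sum_powersetCard {β : Type*} [AddCommMonoid β] (S : Finset α)
    (m : ℕ) {f : Finset α → β} (hf : ∀ J, #J < m → f J = 0) :
    ∑ J ∈ S.powerset, f J = ∑ i ∈ Icc m #S, ∑ J ∈ S.powersetCard i, f J := by
  rw [sum_powerset]
  refine (sum_subset (fun i hi ↦ ?_) fun i hiS hi ↦ ?_).symm
  · simp only [mem_Icc, mem_range] at hi ⊢
    omega
  · refine sum_eq_zero fun J hJ ↦ hf J ?_
    simp only [mem_Icc, mem_range, (mem_powersetCard.mp hJ).2] at hiS hi ⊢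
    omega

variable [DecidableEq α]

theorem sum_powerset_neg_one_pow_mul_eval_sum {R : Type*} [CommRing R]
    (T : Finset α) (μ : α → R) {P : R[X]} (hP : P.natDegree ≤ #T) :
    ∑ L ∈ T.powerset, (-1) ^ #L * P.eval (∑ t ∈ L, μ t)
      = (-1) ^ #T * (#T).factorial * P.coeff #T * ∏ t ∈ T, μ t := by
  induction T using Finset.induction_on generalizing P with
  | empty =>
    rw [eq_C_of_natDegree_le_zero (p := P) (by simpa using hP)]
    simp
  | @insert a T ha ih =>
    rw [card_insert_of_notMem ha] at hP ⊢
    have hshift : ∀ L ∈ T.powerset, (-1) ^ #(insert a L) * P.eval (∑ t ∈ insert a L, μ t)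
        = -((-1) ^ #L * (taylor (μ a) P).eval (∑ t ∈ L, μ t)) := fun L hL ↦ by
      have haL : a ∉ L := fun h ↦ ha (mem_powerset.mp hL h)
      rw [card_insert_of_notMem haL, sum_insert haL, taylor_eval, add_comm (μ a)]
      ring
    calc ∑ L ∈ (insert a T).powerset, (-1) ^ #L * P.eval (∑ t ∈ L, μ t)
        = -∑ L ∈ T.powerset, (-1) ^ #L * (taylor (μ a) P - P).eval (∑ t ∈ L, μ t) := by
          rw [sum_powerset_insert ha, sum_congr rfl hshift, ← sum_add_distrib, ← sum_neg_distrib]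
          refine sum_congr rfl fun L _ ↦ ?_
          rw [eval_sub]
          ring
      _ = (-1) ^ (#T + 1) * (#T + 1).factorial * P.coeff (#T + 1) * ∏ t ∈ insert a T, μ t := by
          rw [ih (natDegree_taylor_sub_le _ hP), coeff_taylor_sub _ hP, prod_insert ha,
            Nat.factorial_succ]
          push_cast
          ring

theorem sum_powerset_neg_one_pow_mul_choose_add_sum (T : Finset α) (μ : α → ℕ) (c : ℕ) :
    ∑ L ∈ T.powerset, (-1 : ℤ) ^ #L * ((c + ∑ t ∈ L, μ t).choose #T : ℤ)
      = (-1) ^ #T * ∏ t ∈ T, (μ t : ℤ) := by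
  set P : ℤ[X] := taylor (c : ℤ) (descPochhammer ℤ #T)
  have hdeg : P.natDegree = #T := by rw [natDegree_taylor, descPochhammer_natDegree]
  have hlead : P.coeff #T = 1 := by
    rw [← hdeg, coeff_natDegree, leadingCoeff_taylor, (monic_descPochhammer ℤ _).leadingCoeff]
  have heval : ∀ L : Finset α, P.eval (∑ t ∈ L, (μ t : ℤ))
      = (#T).factorial * ((c + ∑ t ∈ L, μ t).choose #T : ℤ) := fun L ↦ by
    rw [taylor_eval, ← Nat.cast_sum, ← Nat.cast_add, add_comm, descPochhammer_eval_eq_descFactorial,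
      Nat.descFactorial_eq_factorial_mul_choose, Nat.cast_mul]
  have hdiff := sum_powerset_neg_one_pow_mul_eval_sum T (fun t ↦ (μ t : ℤ)) hdeg.le
  simp only [heval, hlead, mul_one, mul_left_comm _ ((#T).factorial : ℤ), ← mul_sum] at hdiff
  exact mul_left_cancel₀ (Nat.cast_ne_zero.mpr (#T).factorial_ne_zero) (hdiff.trans (by ring))

theorem sum_powerset_choose_card_smul {β : Type*} [AddCommMonoid β] (S : Finset α) (m : ℕ)
    (g : Finset α → β) :
    ∑ J ∈ S.powerset, (#J).choose m • g J
      = ∑ K ∈ S.powersetCard m, ∑ L ∈ (S \ K).powerset, g (K ∪ L) := by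
  calc ∑ J ∈ S.powerset, (#J).choose m • g J
      = ∑ J ∈ S.powerset, ∑ _K ∈ J.powersetCard m, g J := by
        simp only [sum_const, card_powersetCard]
    _ = ∑ K ∈ S.powersetCard m, ∑ J ∈ Icc K S, g J :=
        sum_comm' fun J K ↦ by
          simp only [mem_powerset, mem_powersetCard, mem_Icc]
          exact ⟨fun ⟨hJS, hKJ, hK⟩ ↦ ⟨⟨hKJ, hJS⟩, hKJ.trans hJS, hK⟩,
            fun ⟨⟨hKJ, hJS⟩, _, hK⟩ ↦ ⟨hJS, hKJ, hK⟩⟩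
    _ = ∑ K ∈ S.powersetCard m, ∑ L ∈ (S \ K).powerset, g (K ∪ L) := by
        refine sum_congr rfl fun K hK ↦ ?_
        rw [Icc_eq_image_powerset (mem_powersetCard.mp hK).1, sum_image]
        intro L₁ hL₁ L₂ hL₂ h
        have hdisj : ∀ L ∈ ((S \ K).powerset : Set (Finset α)), Disjoint K L := fun L hL ↦
          disjoint_of_subset_right (mem_powerset.mp hL) disjoint_sdiff
        rw [← union_sdiff_cancel_left (hdisj L₁ hL₁), ← union_sdiff_cancel_left (hdisj L₂ hL₂)]
        exact congrArg (· \ K) h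

theorem sum_powersetCard_sdiff {β : Type*} [AddCommMonoid β] (S : Finset α) {m : ℕ}
    (hm : m ≤ #S) (f : Finset α → β) :
    ∑ K ∈ S.powersetCard m, f (S \ K) = ∑ J ∈ S.powersetCard (#S - m), f J := by
  refine sum_nbij' (S \ ·) (S \ ·) (fun K hK ↦ ?_) (fun J hJ ↦ ?_) (fun K hK ↦ ?_)
    (fun J hJ ↦ ?_) (fun _ _ ↦ rfl)
  · obtain ⟨hKS, rfl⟩ := mem_powersetCard.mp hK
    exact mem_powersetCard.mpr ⟨sdiff_subset, card_sdiff_of_subset hKS⟩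
  · obtain ⟨hJS, hJm⟩ := mem_powersetCard.mp hJ
    exact mem_powersetCard.mpr ⟨sdiff_subset, by rw [card_sdiff_of_subset hJS, hJm]; omega⟩
  · exact Finset.sdiff_sdiff_eq_self (mem_powersetCard.mp hK).1
  · exact Finset.sdiff_sdiff_eq_self (mem_powersetCard.mp hJ).1

theorem sum_superset_neg_one_pow_mul_choose_sum_sub_one {S K : Finset α} (hKS : K ⊆ S)
    (μ : α → ℕ) (hK : 0 < ∑ k ∈ K, μ k) :
    ∑ L ∈ (S \ K).powerset, (-1 : ℤ) ^ #(K ∪ L) * ((∑ j ∈ K ∪ L, μ j - 1).choose #(S \ K) : ℤ)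
      = (-1) ^ #S * ∏ t ∈ S \ K, (μ t : ℤ) := by
  have hsplit : ∀ L ∈ (S \ K).powerset,
      (-1 : ℤ) ^ #(K ∪ L) * ((∑ j ∈ K ∪ L, μ j - 1).choose #(S \ K) : ℤ)
        = (-1) ^ #K * ((-1) ^ #L * ((∑ k ∈ K, μ k - 1 + ∑ t ∈ L, μ t).choose #(S \ K) : ℤ)) :=
    fun L hL ↦ by
      have hdisj : Disjoint K L := disjoint_of_subset_right (mem_powerset.mp hL) disjoint_sdiff
      rw [card_union_of_disjoint hdisj, sum_union hdisj, pow_add, mul_assoc,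
        Nat.sub_add_comm hK]
  rw [sum_congr rfl hsplit, ← mul_sum, sum_powerset_neg_one_pow_mul_choose_add_sum, ← mul_assoc,
    ← pow_add, add_comm #K, card_sdiff_add_card_eq_card hKS]

end Finsets

theorem stmt4_general (r s : ℕ) (hrs : r < s) (μ : Fin s → ℕ)
    (hμ : ∀ j, 1 ≤ μ j) :
    ∑ i ∈ Finset.Icc (s - r) s, (-1 : ℤ) ^ i * (i.choose (s - r)) *
        ∑ J ∈ Finset.powersetCard i (Finset.univ : Finset (Fin s)),
          (((∑ j ∈ J, μ j) - 1).choose r : ℤ)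
      = (-1 : ℤ) ^ s *
        ∑ J ∈ Finset.powersetCard r (Finset.univ : Finset (Fin s)),
          ∏ j ∈ J, (μ j : ℤ) := by
  have hcard : #(univ : Finset (Fin s)) = s := card_fin s
  calc _ = ∑ J ∈ univ.powerset, (#J).choose (s - r) •
        ((-1 : ℤ) ^ #J * ((∑ j ∈ J, μ j - 1).choose r : ℤ)) := by
        rw [sum_powerset_eq_sum_Icc_sum_powersetCard _ (s - r)
          fun J hJ ↦ by simp [Nat.choose_eq_zero_of_lt hJ], hcard]
        refine sum_congr rfl fun i _ ↦ ?_
        rw [mul_sum]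
        refine sum_congr rfl fun J hJ ↦ ?_
        rw [(mem_powersetCard.mp hJ).2, nsmul_eq_mul]
        ring
    _ = ∑ K ∈ powersetCard (s - r) univ, (-1 : ℤ) ^ s * ∏ t ∈ univ \ K, (μ t : ℤ) := by
        rw [sum_powerset_choose_card_smul]
        refine sum_congr rfl fun K hK ↦ ?_
        obtain ⟨-, hK⟩ := mem_powersetCard.mp hK
        obtain ⟨k, hk⟩ : K.Nonempty := card_pos.mp (by omega)
        have := sum_superset_neg_one_pow_mul_choose_sum_sub_one (subset_univ K) μ
          ((hμ k).trans (single_le_sum (fun _ _ ↦ Nat.zero_le _) hk))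
        rwa [hcard, card_univ_sdiff, hK, Fintype.card_fin, Nat.sub_sub_self hrs.le] at this
    _ = _ := by
        rw [← mul_sum, sum_powersetCard_sdiff univ (f := fun J ↦ ∏ j ∈ J, (μ j : ℤ)) (by omega),
          hcard, Nat.sub_sub_self hrs.le]

theorem stmt4 (r s : ℕ) (hr : 1 ≤ r) (hrs : r < s) (μ : Fin s → ℕ)
    (hμ : ∀ j, 1 ≤ μ j) :
    ∑ i ∈ Finset.Icc (s - r) s, (-1 : ℤ) ^ i * (i.choose (s - r)) *
        ∑ J ∈ Finset.powersetCard i (Finset.univ : Finset (Fin s)),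
          (((∑ j ∈ J, μ j) - 1).choose r : ℤ)
      = (-1 : ℤ) ^ s *
        ∑ J ∈ Finset.powersetCard r (Finset.univ : Finset (Fin s)),
          ∏ j ∈ J, (μ j : ℤ) :=
  stmt4_general r s hrs μ hμ
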